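/- arXiv:math/0611113 — 3 statements merged into one kernel-verified Lean document; each statement's English description precedes it below -/
import Mathlib

section
/- Let H, G be Hilbert spaces, ρ : G → H bounded with adjoint ρ*, and T : H → H bounded self-adjoint with im ρ ⊆ ker T and im T ⊆ ker ρ*. If L = T + ρρ* is a Fredholm operator (so that im L is closed and H = ker L ⊕ im L orthogonally), then im L = im T ⊕ im ρ as an orthogonal direct sum of closed subspaces, and moreover H = im ρ ⊕ ker ρ* orthogonally with im ρ closed. -/
open scoped RealInnerProductSpace

section aux
variable {H G : Type*} [NormedAddCommGroup H] [InnerProductSpace ℝ H] [CompleteSpace H]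
    [NormedAddCommGroup G] [InnerProductSpace ℝ G] [CompleteSpace G]

theorem aux_orth_range (ρ : G →L[ℝ] H) :
    (LinearMap.range (ρ : G →ₗ[ℝ] H))ᗮ = LinearMap.ker (ContinuousLinearMap.adjoint ρ : H →ₗ[ℝ] G) := by
  ext x
  simp only [Submodule.mem_orthogonal, LinearMap.mem_ker, LinearMap.mem_range]
  constructor
  · intro h
    have h0 : ∀ g : G, ⟪g, ContinuousLinearMap.adjoint ρ x⟫ = 0 := fun g => by
      rw [ContinuousLinearMap.adjoint_inner_right]
      exact h (ρ g) ⟨g, rfl⟩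
    exact inner_self_eq_zero.mp (h0 _)
  · rintro h y ⟨g, rfl⟩
    change (ContinuousLinearMap.adjoint ρ) x = 0 at h
    show ⟪ρ g, x⟫ = 0
    rw [← ContinuousLinearMap.adjoint_inner_right, h, inner_zero_right]

end aux

/-- Let `T : H → H` be bounded self-adjoint and `ρ : G → H` bounded with `im ρ ⊆ ker T` and
`im T ⊆ ker ρ*`.  If `L = T + ρρ*` has closed range (e.g. if `L` is Fredholm, so that
`H = ker L ⊕ im L` orthogonally), then `im L = im T ⊕ im ρ` as an orthogonal direct sum of
closed subspaces, and `H = im ρ ⊕ ker ρ*` orthogonally with `im ρ` closed. -/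
theorem stmt_3 {H G : Type*} [NormedAddCommGroup H] [InnerProductSpace ℝ H] [CompleteSpace H]
    [NormedAddCommGroup G] [InnerProductSpace ℝ G] [CompleteSpace G]
    (T : H →L[ℝ] H) (hT : IsSelfAdjoint T) (ρ : G →L[ℝ] H)
    (h1 : LinearMap.range (ρ : G →ₗ[ℝ] H) ≤ LinearMap.ker (T : H →ₗ[ℝ] H))
    (h2 : LinearMap.range (T : H →ₗ[ℝ] H) ≤ LinearMap.ker (ContinuousLinearMap.adjoint ρ : H →ₗ[ℝ] G))
    (hclosed : IsClosed
      ((LinearMap.range ((T + ρ ∘L ContinuousLinearMap.adjoint ρ : H →L[ℝ] H) : H →ₗ[ℝ] H) : Submodule ℝ H) : Set H)) :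
    IsClosed ((LinearMap.range (T : H →ₗ[ℝ] H) : Submodule ℝ H) : Set H) ∧
    IsClosed ((LinearMap.range (ρ : G →ₗ[ℝ] H) : Submodule ℝ H) : Set H) ∧
    (∀ x ∈ LinearMap.range (T : H →ₗ[ℝ] H), ∀ y ∈ LinearMap.range (ρ : G →ₗ[ℝ] H), ⟪x, y⟫ = 0) ∧
    LinearMap.range ((T + ρ ∘L ContinuousLinearMap.adjoint ρ : H →L[ℝ] H) : H →ₗ[ℝ] H) =
      LinearMap.range (T : H →ₗ[ℝ] H) ⊔ LinearMap.range (ρ : G →ₗ[ℝ] H) ∧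
    LinearMap.range (ρ : G →ₗ[ℝ] H) ⊔ LinearMap.ker (ContinuousLinearMap.adjoint ρ : H →ₗ[ℝ] G) = ⊤ ∧
    (∀ x ∈ LinearMap.range (ρ : G →ₗ[ℝ] H), ∀ y ∈ LinearMap.ker (ContinuousLinearMap.adjoint ρ : H →ₗ[ℝ] G),
      ⟪x, y⟫ = 0) := by
  set A := ContinuousLinearMap.adjoint ρ with hA
  set L := T + ρ ∘L A with hL
  -- basic algebraic facts
  have hTρ : ∀ g : G, T (ρ g) = 0 := fun g => h1 ⟨g, rfl⟩
  have hAT : ∀ x : H, A (T x) = 0 := fun x => h2 ⟨x, rfl⟩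
  have hsym : ∀ x y : H, ⟪T x, y⟫ = ⟪x, T y⟫ := fun x y => hT.isSymmetric x y
  -- A x = 0 whenever ρ (A x) = 0
  have hAzero : ∀ x : H, ρ (A x) = 0 → A x = 0 := by
    intro x hx
    have : ⟪A x, A x⟫ = 0 := by
      rw [ContinuousLinearMap.adjoint_inner_left, hx, inner_zero_right]
    exact inner_self_eq_zero.mp this
  -- kernel of L
  have hker : ∀ x : H, L x = 0 → T x = 0 ∧ A x = 0 := by
    intro x hx
    have hx' : T x + ρ (A x) = 0 := hx
    have hAρ : A (ρ (A x)) = 0 := by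
      have := congrArg A hx'
      simpa [hAT x] using this
    have hρA : ρ (A x) = 0 := by
      have : ⟪ρ (A x), ρ (A x)⟫ = 0 := by
        rw [← ContinuousLinearMap.adjoint_inner_right, hAρ, inner_zero_right]
      exact inner_self_eq_zero.mp this
    have hTx : T x = 0 := by rwa [hρA, add_zero] at hx'
    exact ⟨hTx, hAzero x hρA⟩
  -- ρ ∘L A and L are self-adjoint
  have hρA_sa : IsSelfAdjoint (ρ ∘L A) := by
    rw [ContinuousLinearMap.isSelfAdjoint_iff']
    rw [ContinuousLinearMap.adjoint_comp, hA, ContinuousLinearMap.adjoint_adjoint]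
  have hLsa : IsSelfAdjoint L := hT.add hρA_sa
  -- orthogonal complement of the range of L
  have horthL : (LinearMap.range (L : H →ₗ[ℝ] H))ᗮ = LinearMap.ker (L : H →ₗ[ℝ] H) := by
    rw [aux_orth_range L, hLsa.adjoint_eq]
  haveI : CompleteSpace (LinearMap.range (L : H →ₗ[ℝ] H) : Submodule ℝ H) := hclosed.completeSpace_coe
  -- range T and range (ρ ∘L A) are contained in range L
  have hdecomp : ∀ x : H, ∃ y ∈ LinearMap.range (L : H →ₗ[ℝ] H), ∃ z ∈ (LinearMap.range (L : H →ₗ[ℝ] H))ᗮ, x = y + z :=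
    fun x => (LinearMap.range (L : H →ₗ[ℝ] H)).exists_add_mem_mem_orthogonal x
  have hTmem : ∀ x : H, T x ∈ LinearMap.range (L : H →ₗ[ℝ] H) := by
    intro x
    obtain ⟨y, hy, z, hz, hxyz⟩ := hdecomp (T x)
    have hzk : L z = 0 := by rw [horthL] at hz; exact hz
    obtain ⟨hTz, hAz⟩ := hker z hzk
    have hzy : ⟪z, y⟫ = 0 := by
      rw [real_inner_comm]; exact (Submodule.mem_orthogonal _ z).mp hz y hy
    have hzT : ⟪z, T x⟫ = 0 := by
      rw [← hsym, hTz, inner_zero_left]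
    have : ⟪z, z⟫ = 0 := by
      have h0 : ⟪z, T x⟫ = ⟪z, y⟫ + ⟪z, z⟫ := by rw [hxyz, inner_add_right]
      rw [hzy, hzT] at h0
      linarith
    have hz0 : z = 0 := inner_self_eq_zero.mp this
    rw [hxyz, hz0, add_zero]; exact hy
  have hρAmem : ∀ x : H, ρ (A x) ∈ LinearMap.range (L : H →ₗ[ℝ] H) := by
    intro x
    obtain ⟨y, hy, z, hz, hxyz⟩ := hdecomp (ρ (A x))
    have hzk : L z = 0 := by rw [horthL] at hz; exact hz
    obtain ⟨hTz, hAz⟩ := hker z hzk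
    have hzy : ⟪z, y⟫ = 0 := by
      rw [real_inner_comm]; exact (Submodule.mem_orthogonal _ z).mp hz y hy
    have hzρ : ⟪z, ρ (A x)⟫ = 0 := by
      rw [← ContinuousLinearMap.adjoint_inner_left, ← hA, hAz, inner_zero_left]
    have : ⟪z, z⟫ = 0 := by
      have h0 : ⟪z, ρ (A x)⟫ = ⟪z, y⟫ + ⟪z, z⟫ := by rw [hxyz, inner_add_right]
      rw [hzy, hzρ] at h0
      linarith
    have hz0 : z = 0 := inner_self_eq_zero.mp this
    rw [hxyz, hz0, add_zero]; exact hy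
  -- orthogonality between range T and range ρ
  have horth1 : ∀ x ∈ LinearMap.range (T : H →ₗ[ℝ] H), ∀ y ∈ LinearMap.range (ρ : G →ₗ[ℝ] H), ⟪x, y⟫ = 0 := by
    rintro _ ⟨v, rfl⟩ _ ⟨g, rfl⟩
    show ⟪T v, ρ g⟫ = 0
    rw [hsym, hTρ, inner_zero_right]
  -- range L = range T ⊔ range (ρ ∘L A)
  have hrangeL : LinearMap.range (L : H →ₗ[ℝ] H) = LinearMap.range (T : H →ₗ[ℝ] H) ⊔ LinearMap.range (ρ ∘L A : H →ₗ[ℝ] H) := by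
    apply le_antisymm
    · rintro _ ⟨v, rfl⟩
      have : L v = T v + (ρ ∘L A) v := rfl
      show L v ∈ _
      rw [this]
      exact Submodule.add_mem_sup ⟨v, rfl⟩ ⟨v, rfl⟩
    · apply sup_le
      · rintro _ ⟨v, rfl⟩; exact hTmem v
      · rintro _ ⟨v, rfl⟩; exact hρAmem v
  -- range T is closed
  have hclosedT : IsClosed ((LinearMap.range (T : H →ₗ[ℝ] H) : Submodule ℝ H) : Set H) := by
    apply isClosed_of_closure_subset
    intro x hx
    have hxL : x ∈ LinearMap.range (L : H →ₗ[ℝ] H) := by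
      have hsub : LinearMap.range (T : H →ₗ[ℝ] H) ≤ LinearMap.range (L : H →ₗ[ℝ] H) := fun u hu => by
        obtain ⟨v, rfl⟩ := hu; exact hTmem v
      have : x ∈ closure ((LinearMap.range (L : H →ₗ[ℝ] H) : Submodule ℝ H) : Set H) :=
        closure_mono hsub hx
      rwa [hclosed.closure_eq] at this
    obtain ⟨v, hv⟩ := hxL
    -- x = T v + ρ (A v); show ρ (A v) = 0
    have hxc : x ∈ (LinearMap.range (T : H →ₗ[ℝ] H)).topologicalClosure := hx
    have hmemO : ρ (A v) ∈ (LinearMap.range (T : H →ₗ[ℝ] H))ᗮ := by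
      rw [Submodule.mem_orthogonal]
      intro u hu
      exact horth1 u hu _ ⟨A v, rfl⟩
    have hxOO : x ∈ ((LinearMap.range (T : H →ₗ[ℝ] H))ᗮ)ᗮ := by
      rwa [Submodule.orthogonal_orthogonal_eq_closure]
    have hzero : ⟪ρ (A v), x⟫ = 0 := hxOO (ρ (A v)) hmemO
    have hTv : ⟪ρ (A v), T v⟫ = 0 := by
      rw [real_inner_comm]; exact horth1 _ ⟨v, rfl⟩ _ ⟨A v, rfl⟩
    have hρAv : ρ (A v) = 0 := by
      have h0 : ⟪ρ (A v), x⟫ = ⟪ρ (A v), T v⟫ + ⟪ρ (A v), ρ (A v)⟫ := by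
        rw [← hv]; exact inner_add_right _ _ _
      rw [hzero, hTv] at h0
      have h00 : ⟪ρ (A v), ρ (A v)⟫ = 0 := by linarith
      exact inner_self_eq_zero.mp h00
    have : x = T v := by
      rw [← hv]; show T v + ρ (A v) = T v; rw [hρAv, add_zero]
    exact this ▸ ⟨v, rfl⟩
  -- range (ρ ∘L A) is closed
  have hclosedρA : IsClosed ((LinearMap.range (ρ ∘L A : H →ₗ[ℝ] H) : Submodule ℝ H) : Set H) := by
    apply isClosed_of_closure_subset
    intro x hx
    have hxL : x ∈ LinearMap.range (L : H →ₗ[ℝ] H) := by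
      have hsub : LinearMap.range (ρ ∘L A : H →ₗ[ℝ] H) ≤ LinearMap.range (L : H →ₗ[ℝ] H) := fun u hu => by
        obtain ⟨v, rfl⟩ := hu; exact hρAmem v
      have : x ∈ closure ((LinearMap.range (L : H →ₗ[ℝ] H) : Submodule ℝ H) : Set H) :=
        closure_mono hsub hx
      rwa [hclosed.closure_eq] at this
    obtain ⟨v, hv⟩ := hxL
    have hmemO : T v ∈ (LinearMap.range (ρ ∘L A : H →ₗ[ℝ] H))ᗮ := by
      rw [Submodule.mem_orthogonal]
      rintro _ ⟨w, rfl⟩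
      rw [real_inner_comm]
      exact horth1 _ ⟨v, rfl⟩ _ ⟨A w, rfl⟩
    have hxOO : x ∈ ((LinearMap.range (ρ ∘L A : H →ₗ[ℝ] H))ᗮ)ᗮ := by
      rwa [Submodule.orthogonal_orthogonal_eq_closure]
    have hzero : ⟪T v, x⟫ = 0 := hxOO (T v) hmemO
    have hρAv : ⟪T v, ρ (A v)⟫ = 0 := horth1 _ ⟨v, rfl⟩ _ ⟨A v, rfl⟩
    have hTv : T v = 0 := by
      have h0 : ⟪T v, x⟫ = ⟪T v, T v⟫ + ⟪T v, ρ (A v)⟫ := by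
        rw [← hv]; exact inner_add_right _ _ _
      rw [hzero, hρAv] at h0
      have h00 : ⟪T v, T v⟫ = 0 := by linarith
      exact inner_self_eq_zero.mp h00
    have : x = ρ (A v) := by
      rw [← hv]; show T v + ρ (A v) = ρ (A v); rw [hTv, zero_add]
    exact this ▸ ⟨v, rfl⟩
  -- range ρ = range (ρ ∘L A)
  have hkerρA : LinearMap.ker (ρ ∘L A : H →ₗ[ℝ] H) = LinearMap.ker (A : H →ₗ[ℝ] G) := by
    ext u
    simp only [LinearMap.mem_ker, ContinuousLinearMap.coe_comp', Function.comp_apply]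
    exact ⟨fun h => hAzero u h, fun h => by change A u = 0 at h; show ρ (A u) = 0; rw [h, map_zero]⟩
  have hρeq : LinearMap.range (ρ : G →ₗ[ℝ] H) = LinearMap.range (ρ ∘L A : H →ₗ[ℝ] H) := by
    apply le_antisymm
    · have e1 : ((LinearMap.range (ρ : G →ₗ[ℝ] H))ᗮ)ᗮ = ((LinearMap.range (ρ ∘L A : H →ₗ[ℝ] H))ᗮ)ᗮ := by
        rw [aux_orth_range ρ, aux_orth_range (ρ ∘L A), hρA_sa.adjoint_eq, hkerρA]
      have e2 : LinearMap.range (ρ : G →ₗ[ℝ] H) ≤ ((LinearMap.range (ρ : G →ₗ[ℝ] H))ᗮ)ᗮ :=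
        Submodule.le_orthogonal_orthogonal _
      rw [e1, Submodule.orthogonal_orthogonal_eq_closure] at e2
      exact le_trans e2 (Submodule.topologicalClosure_minimal _ le_rfl hclosedρA)
    · rintro _ ⟨v, rfl⟩
      exact ⟨A v, rfl⟩
  have hclosedρ : IsClosed ((LinearMap.range (ρ : G →ₗ[ℝ] H) : Submodule ℝ H) : Set H) := by
    rw [hρeq]; exact hclosedρA
  -- the decomposition H = range ρ ⊕ ker A
  haveI : CompleteSpace (LinearMap.range (ρ : G →ₗ[ℝ] H) : Submodule ℝ H) := hclosedρ.completeSpace_coe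
  have hsupρ : LinearMap.range (ρ : G →ₗ[ℝ] H) ⊔ LinearMap.ker (A : H →ₗ[ℝ] G) = ⊤ := by
    rw [← aux_orth_range ρ]
    exact Submodule.sup_orthogonal_of_hasOrthogonalProjection
  refine ⟨hclosedT, hclosedρ, horth1, ?_, hsupρ, ?_⟩
  · rw [hrangeL, ← hρeq]
  · rintro _ ⟨g, rfl⟩ y hy
    change A y = 0 at hy
    show ⟪ρ g, y⟫ = 0
    rw [← ContinuousLinearMap.adjoint_inner_right, ← hA, hy, inner_zero_right]
end

section
/- Suppose E : B → ℝ is a C² function on a ball B around 0 in a Hilbert space decomposed orthogonally as K₀ ⊕ K_±, with K₀ finite-dimensional, such that for b = b₀ + ℓ(b₀) + b_± one has the bounds ‖∇E(b)‖ ≥ c(‖∇g(b₀)‖ + ‖b_±‖) and |E(b)| ≤ |g(b₀)| + C‖b_±‖², where g(b₀) = E(b₀ + ℓ(b₀)) satisfies a Łojasiewicz inequality |g(b₀)|^{1−θ} ≤ c‖∇g(b₀)‖ with θ ∈ (0, 1/2). Then E satisfies the Łojasiewicz inequality |E(b)|^{1−θ} ≤ K ‖∇E(b)‖ for all sufficiently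 small b. -/
open scoped RealInnerProductSpace
open Topology

theorem ContDiffAt.continuousAt_gradient {𝕜 F : Type*} [RCLike 𝕜] [NormedAddCommGroup F]
    [InnerProductSpace 𝕜 F] [CompleteSpace F] {f : F → 𝕜} {x : F} {n : WithTop ℕ∞}
    (hf : ContDiffAt 𝕜 n f x) (hn : n ≠ 0) : ContinuousAt (gradient f) x :=
  (InnerProductSpace.toDual 𝕜 F).symm.continuous.continuousAt.comp (hf.continuousAt_fderiv hn)

namespace Real

lemma rpow_le_rpow_sub_one_mul {x B p : ℝ} (hx : 0 ≤ x) (hxB : x ≤ B) (hp : 1 ≤ p) :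
    x ^ p ≤ B ^ (p - 1) * x := by
  rcases hx.eq_or_lt with rfl | hx
  · rw [zero_rpow (by linarith), mul_zero]
  · calc x ^ p = x ^ (p - 1) * x := by rw [← rpow_add_one hx.ne', sub_add_cancel]
      _ ≤ B ^ (p - 1) * x := by gcongr

/-- Subadditivity of `t ↦ t ^ (1 - θ)` splits the sum, and the quadratic term becomes linear
because `w ^ (2 - 2θ) ≤ B ^ (1 - 2θ) w` for `w ≤ B`, as `2 - 2θ ≥ 1`. -/
lemma rpow_le_of_le_add_sq {e a γ w B C c' θ : ℝ} (hθ0 : 0 ≤ θ) (hθ : θ ≤ 1 / 2)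
    (hC : 0 ≤ C) (hc' : 0 ≤ c') (he : 0 ≤ e) (ha : 0 ≤ a) (hγ : 0 ≤ γ) (hw : 0 ≤ w)
    (hwB : w ≤ B) (heaw : e ≤ a + C * w ^ 2) (hloja : a ^ (1 - θ) ≤ c' * γ) :
    e ^ (1 - θ) ≤ (c' + C ^ (1 - θ) * B ^ (1 - 2 * θ)) * (γ + w) := by
  have hw2 : (C * w ^ 2) ^ (1 - θ) ≤ C ^ (1 - θ) * (B ^ (1 - 2 * θ) * w) := by
    have hwp := rpow_le_rpow_sub_one_mul hw hwB (p := 2 * (1 - θ)) (by linarith)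
    rw [show 2 * (1 - θ) - 1 = 1 - 2 * θ by ring] at hwp
    rw [mul_rpow hC (by positivity), ← rpow_two, ← rpow_mul hw]
    gcongr
  have hB : 0 ≤ B := hw.trans hwB
  calc e ^ (1 - θ) ≤ (a + C * w ^ 2) ^ (1 - θ) := by gcongr; linarith
    _ ≤ a ^ (1 - θ) + (C * w ^ 2) ^ (1 - θ) :=
      rpow_add_le_add_rpow ha (by positivity) (by linarith) (by linarith)
    _ ≤ c' * γ + C ^ (1 - θ) * (B ^ (1 - 2 * θ) * w) := add_le_add hloja hw2
    _ ≤ (c' + C ^ (1 - θ) * B ^ (1 - 2 * θ)) * (γ + w) := by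
      have : 0 ≤ C ^ (1 - θ) * B ^ (1 - 2 * θ) := by positivity
      nlinarith

end Real

theorem stmt_7_general {H : Type*} [NormedAddCommGroup H] [InnerProductSpace ℝ H] [CompleteSpace H]
    (K₀ Kpm : Submodule ℝ H) [FiniteDimensional ℝ K₀]
    (r : ℝ) (hr : 0 < r)
    (E : H → ℝ) (hE : ContDiffOn ℝ 2 E (Metric.ball 0 r))
    (g : K₀ → ℝ)
    (b₀ : H → K₀) (bpm : H → Kpm)
    (θ : ℝ) (hθ : θ ∈ Set.Ioo (0 : ℝ) (1/2))
    (c C c' : ℝ) (hc : 0 < c) (hC : 0 < C) (hc' : 0 < c')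
    (hgradlow : ∀ b ∈ Metric.ball (0 : H) r,
      c * (‖gradient g (b₀ b)‖ + ‖(bpm b : H)‖) ≤ ‖gradient E b‖)
    (hEupper : ∀ b ∈ Metric.ball (0 : H) r,
      |E b| ≤ |g (b₀ b)| + C * ‖(bpm b : H)‖ ^ 2)
    (hloja : ∀ v : K₀, |g v| ^ (1 - θ) ≤ c' * ‖gradient g v‖) :
    ∃ K > (0 : ℝ), ∃ ε > (0 : ℝ), ∀ b : H, ‖b‖ < ε →
      |E b| ^ (1 - θ) ≤ K * ‖gradient E b‖ := by
  set M := ‖gradient E 0‖ + 1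
  have hball : Metric.ball (0 : H) r ∈ 𝓝 0 := Metric.ball_mem_nhds 0 hr
  have hgradE : ∀ᶠ b in 𝓝 (0 : H), ‖gradient E b‖ < M :=
    ((hE.contDiffAt hball).continuousAt_gradient two_ne_zero).norm.eventually_lt
      continuousAt_const (lt_add_one _)
  obtain ⟨ε, hε, hnear⟩ := Metric.eventually_nhds_iff.mp (hgradE.and hball)
  set K₁ := c' + C ^ (1 - θ) * (M / c) ^ (1 - 2 * θ)
  refine ⟨K₁ / c, by positivity, ε, hε, fun b hb => ?_⟩
  obtain ⟨hbM, hbr⟩ := hnear (by rwa [dist_zero_right])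
  have hlow := hgradlow b hbr
  -- `‖∇E‖` is bounded near `0`, so `hgradlow` keeps `‖b_±‖` bounded.
  have hbpm : ‖(bpm b : H)‖ ≤ M / c := by
    rw [le_div_iff₀ hc]
    nlinarith [norm_nonneg (gradient g (b₀ b))]
  calc |E b| ^ (1 - θ)
      ≤ K₁ * (‖gradient g (b₀ b)‖ + ‖(bpm b : H)‖) :=
        Real.rpow_le_of_le_add_sq hθ.1.le hθ.2.le hC.le hc'.le (abs_nonneg _) (abs_nonneg _)
          (norm_nonneg _) (norm_nonneg _) hbpm (hEupper b hbr) (hloja _)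
    _ = K₁ / c * (c * (‖gradient g (b₀ b)‖ + ‖(bpm b : H)‖)) := by field_simp
    _ ≤ K₁ / c * ‖gradient E b‖ := by gcongr

/-- Reduction of the Łojasiewicz inequality to the finite-dimensional kernel: if `E` is `C²`
on a ball around `0` in a Hilbert space `H = K₀ ⊕ K_±` (orthogonally, `K₀` finite
dimensional), each `b` decomposes as `b = b₀ + ℓ(b₀) + b_±`, and one has the bounds
`‖∇E(b)‖ ≥ c (‖∇g(b₀)‖ + ‖b_±‖)` and `|E(b)| ≤ |g(b₀)| + C ‖b_±‖²` where
`g(b₀) = E(b₀ + ℓ(b₀))` satisfies the Łojasiewicz inequality `|g|^{1−θ} ≤ c' ‖∇g‖` with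
`θ ∈ (0, 1/2)`, then `E` satisfies `|E(b)|^{1−θ} ≤ K ‖∇E(b)‖` for all sufficiently small `b`. -/
theorem stmt_7 {H : Type*} [NormedAddCommGroup H] [InnerProductSpace ℝ H] [CompleteSpace H]
    (K₀ Kpm : Submodule ℝ H) [FiniteDimensional ℝ K₀]
    (horth : ∀ x ∈ K₀, ∀ y ∈ Kpm, ⟪x, y⟫ = 0) (hsum : K₀ ⊔ Kpm = ⊤)
    (r : ℝ) (hr : 0 < r)
    (E : H → ℝ) (hE : ContDiffOn ℝ 2 E (Metric.ball 0 r))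
    (ℓ : K₀ → Kpm) (hℓ0 : ℓ 0 = 0)
    (g : K₀ → ℝ) (hg : ∀ v : K₀, g v = E ((v : H) + (ℓ v : H)))
    (b₀ : H → K₀) (bpm : H → Kpm)
    (hdecomp : ∀ b : H, b = (b₀ b : H) + (ℓ (b₀ b) : H) + (bpm b : H))
    (θ : ℝ) (hθ : θ ∈ Set.Ioo (0 : ℝ) (1/2))
    (c C c' : ℝ) (hc : 0 < c) (hC : 0 < C) (hc' : 0 < c')
    (hgradlow : ∀ b ∈ Metric.ball (0 : H) r,
      c * (‖gradient g (b₀ b)‖ + ‖(bpm b : H)‖) ≤ ‖gradient E b‖)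
    (hEupper : ∀ b ∈ Metric.ball (0 : H) r,
      |E b| ≤ |g (b₀ b)| + C * ‖(bpm b : H)‖ ^ 2)
    (hloja : ∀ v : K₀, |g v| ^ (1 - θ) ≤ c' * ‖gradient g v‖) :
    ∃ K > (0 : ℝ), ∃ ε > (0 : ℝ), ∀ b : H, ‖b‖ < ε →
      |E b| ^ (1 - θ) ≤ K * ‖gradient E b‖ :=
  stmt_7_general K₀ Kpm r hr E hE g b₀ bpm θ hθ c C c' hc hC hc' hgradlow hEupper hloja
end

section
/- Let μ be a moment map for a Hamiltonian G-action on a Kähler manifold and x(t) a solution of the generalized system ∂x/∂t + Iρ_x(Ω) = 0, ∂Ω/∂t + ρ_x*ρ_x(Ω) = 0 with initial conditions x(0) = x₀, Ω(0) = *μ(x₀). Then Ω(t) = *μ(x(t)) for all t: the function ψ(t) = Ω(t) − *μ(x(t)) satisfies ψ' = 0 and ψ(0) = 0. -/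
open scoped RealInnerProductSpace

/-!
Differentiating `ψ = Ω - μ ∘ x` gives `ψ' = -ρ_x* ρ_x Ω - dμ_x(-I ρ_x Ω)`. The moment map
equation together with the orthogonality of `I` identifies `dμ_x ∘ I ∘ ρ_x` with `ρ_x* ρ_x`,
so `ψ' = 0`, and `ψ(0) = 0` forces `ψ ≡ 0`.
-/

section MomentMap

variable {M 𝔤 : Type*} [NormedAddCommGroup M] [InnerProductSpace ℝ M] [CompleteSpace M]
    [NormedAddCommGroup 𝔤] [InnerProductSpace ℝ 𝔤] [CompleteSpace 𝔤]
    {I : M →L[ℝ] M} {ρ : M → 𝔤 →L[ℝ] M} {μ : M → 𝔤}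

theorem fderiv_moment_map_I_rho (hIorth : ∀ X Y : M, ⟪I X, I Y⟫ = ⟪X, Y⟫)
    (hmoment : ∀ (x : M) (u : 𝔤) (X : M), ⟪fderiv ℝ μ x X, u⟫ = ⟪I (ρ x u), X⟫)
    (x : M) (v : 𝔤) :
    fderiv ℝ μ x (I (ρ x v)) = ContinuousLinearMap.adjoint (ρ x) (ρ x v) := by
  refine ext_inner_right ℝ fun u => ?_
  rw [hmoment, hIorth, real_inner_comm, ContinuousLinearMap.adjoint_inner_left]

theorem hasDerivAt_sub_moment_map_eq_zero (hIorth : ∀ X Y : M, ⟪I X, I Y⟫ = ⟪X, Y⟫)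
    (hμ : Differentiable ℝ μ)
    (hmoment : ∀ (x : M) (u : 𝔤) (X : M), ⟪fderiv ℝ μ x X, u⟫ = ⟪I (ρ x u), X⟫)
    {x : ℝ → M} {Ω : ℝ → 𝔤} {t : ℝ}
    (hx : HasDerivAt x (-(I (ρ (x t) (Ω t)))) t)
    (hΩ : HasDerivAt Ω (-(ContinuousLinearMap.adjoint (ρ (x t)) ((ρ (x t)) (Ω t)))) t) :
    HasDerivAt (fun s => Ω s - μ (x s)) 0 t := by
  have hμx : HasDerivAt (fun s => μ (x s))
      (-(ContinuousLinearMap.adjoint (ρ (x t)) (ρ (x t) (Ω t)))) t := by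
    have := (hμ (x t)).hasFDerivAt.comp_hasDerivAt t hx
    rwa [map_neg, fderiv_moment_map_I_rho hIorth hmoment] at this
  exact (hΩ.sub hμx).congr_deriv (sub_self _)

end MomentMap

theorem stmt_12_general {M 𝔤 : Type*} [NormedAddCommGroup M] [InnerProductSpace ℝ M] [CompleteSpace M]
    [NormedAddCommGroup 𝔤] [InnerProductSpace ℝ 𝔤] [CompleteSpace 𝔤]
    (I : M →L[ℝ] M)
    (hIorth : ∀ X Y : M, ⟪I X, I Y⟫ = ⟪X, Y⟫)
    (ρ : M → 𝔤 →L[ℝ] M) (μ : M → 𝔤) (hμ : Differentiable ℝ μ)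
    (hmoment : ∀ (x : M) (u : 𝔤) (X : M), ⟪fderiv ℝ μ x X, u⟫ = ⟪I (ρ x u), X⟫)
    (x : ℝ → M) (Ω : ℝ → 𝔤)
    (hx : ∀ t : ℝ, HasDerivAt x (-(I (ρ (x t) (Ω t)))) t)
    (hΩ : ∀ t : ℝ, HasDerivAt Ω
      (-(ContinuousLinearMap.adjoint (ρ (x t)) ((ρ (x t)) (Ω t)))) t)
    (h0 : Ω 0 = μ (x 0)) :
    ∀ t : ℝ, Ω t = μ (x t) := by
  have hψ' : ∀ t, HasDerivAt (fun s => Ω s - μ (x s)) 0 t := fun t =>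
    hasDerivAt_sub_moment_map_eq_zero hIorth hμ hmoment (hx t) (hΩ t)
  intro t
  have hψ : Ω t - μ (x t) = Ω 0 - μ (x 0) :=
    is_const_of_deriv_eq_zero (fun s => (hψ' s).differentiableAt) (fun s => (hψ' s).deriv) t 0
  rwa [h0, sub_self, sub_eq_zero] at hψ

/-- If `(x(t), Ω(t))` solves the generalized system `∂x/∂t + Iρ_x(Ω) = 0`,
`∂Ω/∂t + ρ_x*ρ_x(Ω) = 0` with `x(0) = x₀` and `Ω(0) = *μ(x₀)`, then `Ω(t) = *μ(x(t))` for
all `t` (the function `ψ = Ω − *μ(x)` satisfies `ψ' = 0`, `ψ(0) = 0`). -/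
theorem stmt_12 {M 𝔤 : Type*} [NormedAddCommGroup M] [InnerProductSpace ℝ M] [CompleteSpace M]
    [NormedAddCommGroup 𝔤] [InnerProductSpace ℝ 𝔤] [CompleteSpace 𝔤]
    (I : M →L[ℝ] M) (hII : ∀ X : M, I (I X) = -X)
    (hIorth : ∀ X Y : M, ⟪I X, I Y⟫ = ⟪X, Y⟫)
    (ρ : M → 𝔤 →L[ℝ] M) (μ : M → 𝔤) (hμ : Differentiable ℝ μ)
    (hmoment : ∀ (x : M) (u : 𝔤) (X : M), ⟪fderiv ℝ μ x X, u⟫ = ⟪I (ρ x u), X⟫)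
    (x : ℝ → M) (Ω : ℝ → 𝔤)
    (hx : ∀ t : ℝ, HasDerivAt x (-(I (ρ (x t) (Ω t)))) t)
    (hΩ : ∀ t : ℝ, HasDerivAt Ω
      (-(ContinuousLinearMap.adjoint (ρ (x t)) ((ρ (x t)) (Ω t)))) t)
    (h0 : Ω 0 = μ (x 0)) :
    ∀ t : ℝ, Ω t = μ (x t) :=
  stmt_12_general I hIorth ρ μ hμ hmoment x Ω hx hΩ h0
end
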